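/- arXiv:1504.00531 — 6 statements merged into one kernel-verified Lean document; each statement's English description precedes it below -/
import Mathlib

section
/- For every natural number n ≥ 1 and every k ≥ 1, there exists a divisor d of n with d ≤ n^(1/2^k) such that τ(n) ≤ 2^(2^k − 1) · τ(d)^(2^k), where τ denotes the number-of-divisors function. -/
private lemma tau_prime_pow (p i : ℕ) (hp : p.Prime) :
    (p ^ i).divisors.card = i + 1 := by
  rw [Nat.divisors_prime_pow hp, Finset.card_map, Finset.card_range]

private lemma tau_prime (p : ℕ) (hp : p.Prime) : p.divisors.card = 2 := by
  have := tau_prime_pow p 1 hp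
  simpa using this

/-- Key lemma: for every `n ≥ 1` there is `d ∣ n` with `d ^ 2 ≤ n` and
`τ(n) ≤ 2 τ(d)^2`; moreover either `τ(n) ≤ τ(d)^2`, or there is a spare
prime `q ∣ n` with `q ∤ d` and `d^2 * q ≤ n`. -/
private lemma key : ∀ n : ℕ, 1 ≤ n → ∃ d : ℕ, d ∣ n ∧ d ^ 2 ≤ n ∧
    n.divisors.card ≤ 2 * d.divisors.card ^ 2 ∧
    (n.divisors.card ≤ d.divisors.card ^ 2 ∨
      ∃ q : ℕ, q.Prime ∧ q ∣ n ∧ ¬ q ∣ d ∧ d ^ 2 * q ≤ n) := by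
  refine Nat.recOnPrimePow (fun h => absurd h (by norm_num)) ?_ ?_
  · intro _
    exact ⟨1, one_dvd 1, le_refl 1, by simp, Or.inl (by simp)⟩
  · intro a p i hp hpa hi IH hpos
    have ha : 1 ≤ a := by
      rcases Nat.eq_zero_or_pos a with rfl | h
      · simp at hpos
      · exact h
    obtain ⟨d, hdvd, hd2, hτ2, hcase⟩ := IH ha
    have hpd : ¬ p ∣ d := fun h => hpa (h.trans hdvd)
    have hpcop : (p ^ i).Coprime a := ((hp.coprime_iff_not_dvd).2 hpa).pow_left i
    have hτn : (p ^ i * a).divisors.card = (i + 1) * a.divisors.card := by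
      rw [hpcop.card_divisors_mul, tau_prime_pow p i hp]
    rcases Nat.lt_or_ge i 2 with hi1 | hi2
    · -- i = 1
      have hieq : i = 1 := by omega
      subst hieq
      rw [pow_one] at hτn hpcop ⊢
      rcases hcase with hA | ⟨q, hq, hqa, hqd, hq2⟩
      · -- state A → state B, keep d, store q := p
        refine ⟨d, hdvd.mul_left p, ?_, ?_, Or.inr ⟨p, hp, dvd_mul_right p a, hpd, ?_⟩⟩
        · exact hd2.trans (Nat.le_mul_of_pos_left a hp.pos)
        · rw [hτn]; nlinarith [hA]
        · calc d ^ 2 * p ≤ a * p := Nat.mul_le_mul_right p hd2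
            _ = p * a := mul_comm a p
      · -- state B → state A, put min(p,q) into d
        rcases le_total p q with hpq | hqp
        · -- use p
          have hcop : d.Coprime p := ((hp.coprime_iff_not_dvd).2 hpd).symm
          have hτd' : (d * p).divisors.card = d.divisors.card * 2 := by
            rw [hcop.card_divisors_mul, tau_prime p hp]
          have hdq2 : d ^ 2 * q ≤ a := hq2
          refine ⟨d * p, ?_, ?_, ?_, Or.inl ?_⟩
          · have : d * p ∣ a * p := mul_dvd_mul_right hdvd p
            rwa [mul_comm a p] at this
          · have h1 : (d * p) ^ 2 = d ^ 2 * p * p := by ring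
            have h2 : d ^ 2 * p ≤ a := le_trans (by nlinarith) hdq2
            calc (d * p) ^ 2 = d ^ 2 * p * p := h1
              _ ≤ a * p := Nat.mul_le_mul_right p h2
              _ = p * a := mul_comm a p
          · rw [hτn, hτd']; nlinarith [hτ2]
          · rw [hτn, hτd']; nlinarith [hτ2]
        · -- use q
          have hcop : d.Coprime q := ((hq.coprime_iff_not_dvd).2 hqd).symm
          have hτd' : (d * q).divisors.card = d.divisors.card * 2 := by
            rw [hcop.card_divisors_mul, tau_prime q hq]
          have hda : d * q ∣ a := hcop.mul_dvd_of_dvd_of_dvd hdvd hqa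
          refine ⟨d * q, hda.mul_left p, ?_, ?_, Or.inl ?_⟩
          · have h2 : d ^ 2 * q ≤ a := hq2
            calc (d * q) ^ 2 = d ^ 2 * q * q := by ring
              _ ≤ a * q := Nat.mul_le_mul_right q h2
              _ ≤ a * p := Nat.mul_le_mul_left a hqp
              _ = p * a := mul_comm a p
          · rw [hτn, hτd']; nlinarith [hτ2]
          · rw [hτn, hτd']; nlinarith [hτ2]
    · -- i ≥ 2 : multiply d by p^(i/2)
      set b := i / 2 with hb
      have hbb : 2 * b ≤ i := by omega
      have hb1 : 1 ≤ b := by omega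
      have hnum : i + 1 ≤ (b + 1) ^ 2 := by
        have h3 : i ≤ 2 * b + 1 := by omega
        nlinarith [h3, hb1]
      have hcop2 : (p ^ b).Coprime d := ((hp.coprime_iff_not_dvd).2 hpd).pow_left b
      have hτd' : (p ^ b * d).divisors.card = (b + 1) * d.divisors.card := by
        rw [hcop2.card_divisors_mul, tau_prime_pow p b hp]
      have hsize : (p ^ b * d) ^ 2 ≤ p ^ i * a := by
        have h1 : (p ^ b * d) ^ 2 = p ^ (2 * b) * d ^ 2 := by
          rw [mul_pow, ← pow_mul, mul_comm b 2]
        rw [h1]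
        exact Nat.mul_le_mul (Nat.pow_le_pow_right hp.pos hbb) hd2
      have hdvd' : p ^ b * d ∣ p ^ i * a :=
        mul_dvd_mul (pow_dvd_pow p (by omega)) hdvd
      refine ⟨p ^ b * d, hdvd', hsize, ?_, ?_⟩
      · rw [hτn, hτd']
        calc (i + 1) * a.divisors.card
            ≤ (b + 1) ^ 2 * (2 * d.divisors.card ^ 2) := Nat.mul_le_mul hnum hτ2
          _ = 2 * ((b + 1) * d.divisors.card) ^ 2 := by ring
      · rcases hcase with hA | ⟨q, hq, hqa, hqd, hq2⟩
        · left
          rw [hτn, hτd']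
          calc (i + 1) * a.divisors.card
              ≤ (b + 1) ^ 2 * d.divisors.card ^ 2 := Nat.mul_le_mul hnum hA
            _ = ((b + 1) * d.divisors.card) ^ 2 := by ring
        · right
          refine ⟨q, hq, hqa.mul_left _, ?_, ?_⟩
          · intro hdv
            rcases (Nat.Prime.dvd_mul hq).1 hdv with h | h
            · have heq : q = p := (Nat.prime_dvd_prime_iff_eq hq hp).1 (hq.dvd_of_dvd_pow h)
              exact hpa (heq ▸ hqa)
            · exact hqd h
          · have h1 : (p ^ b * d) ^ 2 * q = p ^ (2 * b) * (d ^ 2 * q) := by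
              rw [mul_pow, ← pow_mul, mul_comm b 2]; ring
            rw [h1]
            exact Nat.mul_le_mul (Nat.pow_le_pow_right hp.pos hbb) hq2

/-- For every `n ≥ 1` and `k ≥ 1` there is a divisor `d ∣ n` with `d ^ (2^k) ≤ n`
such that `τ(n) ≤ 2^(2^k - 1) · τ(d)^(2^k)`. -/
theorem stmt_0 (n k : ℕ) (hn : 1 ≤ n) (hk : 1 ≤ k) :
    ∃ d : ℕ, d ∣ n ∧ d ^ (2 ^ k) ≤ n ∧
      n.divisors.card ≤ 2 ^ (2 ^ k - 1) * d.divisors.card ^ (2 ^ k) := by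
  obtain ⟨j, rfl⟩ : ∃ j, k = j + 1 := ⟨k - 1, by omega⟩
  clear hk
  induction j with
  | zero =>
      obtain ⟨d, h1, h2, h3, _⟩ := key n hn
      exact ⟨d, h1, by simpa using h2, by simpa using h3⟩
  | succ j ih =>
      obtain ⟨d, hdn, hdk, hτ⟩ := ih
      have hd1 : 1 ≤ d := Nat.pos_of_dvd_of_pos hdn hn
      obtain ⟨e, hed, he2, heτ, _⟩ := key d hd1
      have hone : 1 ≤ 2 ^ (j + 1) := Nat.one_le_two_pow
      have hpow : (2 : ℕ) ^ (j + 1 + 1) = 2 * 2 ^ (j + 1) := by ring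
      refine ⟨e, hed.trans hdn, ?_, ?_⟩
      · calc e ^ 2 ^ (j + 1 + 1) = (e ^ 2) ^ 2 ^ (j + 1) := by
              rw [← pow_mul, hpow, mul_comm]
          _ ≤ d ^ 2 ^ (j + 1) := Nat.pow_le_pow_left he2 _
          _ ≤ n := hdk
      · calc n.divisors.card
            ≤ 2 ^ (2 ^ (j + 1) - 1) * d.divisors.card ^ 2 ^ (j + 1) := hτ
          _ ≤ 2 ^ (2 ^ (j + 1) - 1) * (2 * e.divisors.card ^ 2) ^ 2 ^ (j + 1) :=
              Nat.mul_le_mul_left _ (Nat.pow_le_pow_left heτ _)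
          _ = 2 ^ (2 ^ (j + 1) - 1) * (2 ^ 2 ^ (j + 1) *
                e.divisors.card ^ 2 ^ (j + 1 + 1)) := by
              rw [mul_pow, ← pow_mul, hpow, mul_comm 2 (2 ^ (j+1))]
          _ = 2 ^ (2 ^ (j + 1 + 1) - 1) * e.divisors.card ^ 2 ^ (j + 1 + 1) := by
              rw [← mul_assoc, ← pow_add]
              congr 2
              omega
end

section
/- For every natural number n ≥ 2, there exists a divisor d of n with d^2 ≤ n such that τ(n) ≤ 2·τ(d)^2. -/
lemma tau_mul_le (a b : ℕ) :
    (a * b).divisors.card ≤ a.divisors.card * b.divisors.card := by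
  rw [Nat.divisors_mul]; exact Finset.card_mul_le

/-- For every `n ≥ 2` there is a divisor `d ∣ n` with `d² ≤ n` and `τ(n) ≤ 2·τ(d)²`. -/
theorem stmt_1 (n : ℕ) (hn : 2 ≤ n) :
    ∃ d : ℕ, d ∣ n ∧ d ^ 2 ≤ n ∧ n.divisors.card ≤ 2 * d.divisors.card ^ 2 := by
  have hn0 : n ≠ 0 := by omega
  set D := n.divisors.filter (fun e => e ^ 2 ≤ n) with hD
  have hmemD : ∀ e, e ∈ D ↔ e ∣ n ∧ e ^ 2 ≤ n := by
    intro e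
    simp [hD, Nat.mem_divisors, hn0, and_assoc]
  have h1 : (1 : ℕ) ∈ D := by
    rw [hmemD]; exact ⟨one_dvd n, by omega⟩
  have hne : D.Nonempty := ⟨1, h1⟩
  obtain ⟨d, hdD, hdmax⟩ := D.exists_max_image (fun e => e.divisors.card) hne
  obtain ⟨hdvd, hdsq⟩ := (hmemD d).1 hdD
  refine ⟨d, hdvd, hdsq, ?_⟩
  -- d₀ : value-maximal element of D
  set d₀ := D.max' hne with hd₀
  have hd₀D : d₀ ∈ D := D.max'_mem hne
  obtain ⟨hd₀dvd, hd₀sq⟩ := (hmemD d₀).1 hd₀D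
  set m := n / d₀ with hm
  have hd₀pos : 0 < d₀ := Nat.pos_of_dvd_of_pos hd₀dvd (by omega)
  have hnm : n = d₀ * m := (Nat.mul_div_cancel' hd₀dvd).symm
  have hm2 : 2 ≤ m := by
    rcases Nat.lt_or_ge m 2 with h | h
    · interval_cases m
      · omega
      · -- m = 1 : n = d₀, contradiction with d₀² ≤ n
        exfalso
        have : n = d₀ := by omega
        nlinarith
    · exact h
  set p := m.minFac with hp
  have hpprime : p.Prime := Nat.minFac_prime (by omega)
  have hpm : p ∣ m := Nat.minFac_dvd m
  set e := m / p with he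
  have hme : m = p * e := (Nat.mul_div_cancel' hpm).symm
  have hedvd : e ∣ n := ⟨d₀ * p, by rw [hnm, hme]; ring⟩
  have hdpdvd : d₀ * p ∣ n := ⟨e, by rw [hnm, hme]; ring⟩
  have hp2 : 2 ≤ p := hpprime.two_le
  -- d₀ * p ∉ D since it exceeds the max, hence (d₀*p)² > n
  have hkey : n < (d₀ * p) ^ 2 := by
    by_contra h
    push_neg at h
    have : d₀ * p ∈ D := (hmemD _).2 ⟨hdpdvd, h⟩
    have := D.le_max' _ this
    nlinarith
  have hesq : e ^ 2 ≤ n := by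
    have hne : n = (d₀ * p) * e := by rw [hnm, hme]; ring
    nlinarith [sq_nonneg e, Nat.zero_le e]
  have heD : e ∈ D := (hmemD _).2 ⟨hedvd, hesq⟩
  have hτe : e.divisors.card ≤ d.divisors.card := hdmax e heD
  have hτd₀ : d₀.divisors.card ≤ d.divisors.card := hdmax d₀ hd₀D
  have hτp : p.divisors.card = 2 := by
    rw [hpprime.divisors, Finset.card_insert_of_notMem (by simp [Ne.symm hpprime.ne_one]), Finset.card_singleton]
  calc n.divisors.card ≤ d₀.divisors.card * m.divisors.card := by
        rw [hnm]; exact tau_mul_le _ _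
    _ ≤ d₀.divisors.card * (p.divisors.card * e.divisors.card) := by
        have := tau_mul_le p e
        rw [← hme] at this
        exact Nat.mul_le_mul_left _ this
    _ ≤ 2 * d.divisors.card ^ 2 := by
        rw [hτp]; nlinarith
end

section
/- Let γ be a Gaussian integer that is primitive (not divisible by any rational prime) and coprime to 2, and let m be a positive integer dividing the norm N(γ). Then there are exactly four Gaussian integers λ, all associates of one another, such that λ divides γ and N(λ) = m; moreover exactly one of these four has real part that is positive and odd. -/
/-!
Write `γ = a + bi`. Primitivity means `gcd(a, b) = 1`; if `ua + vb = 1` then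
`2 = (u + vi)γ̄ + (u - vi)γ`, so, `γ` being prime to `2`, `γ` and `γ̄` are coprime.
If `λ₁, λ₂ ∣ γ` have equal norms, then `λ₁ ∣ λ₁λ̄₁ = λ₂λ̄₂` while `λ₁` is prime to `λ̄₂ ∣ γ̄`,
so `λ₁ ∣ λ₂`: all such divisors are associate. For existence take `λ = gcd(γ, m)`: `λλ̄ ∣ m`
because `λ` and `λ̄` are coprime divisors of `m`, and `m ∣ λλ̄` because `λ = xγ + ym` and
`m ∣ γγ̄`. Finally `m` is odd, so exactly one of `a, b` is odd for `λ = a + bi`, and the real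
parts `a, -a, -b, b` of `λ, -λ, iλ, -iλ` contain exactly one positive odd number.
-/

namespace Zsqrtd

variable {d : ℤ}

theorem isCoprime_re_im_of_not_natCast_dvd {z : ℤ√d}
    (h : ∀ p : ℕ, p.Prime → ¬ (p : ℤ√d) ∣ z) : IsCoprime z.re z.im := by
  rw [Int.isCoprime_iff_gcd_eq_one]
  refine Nat.coprime_of_dvd fun p hp hre him => h p hp ?_
  exact_mod_cast (intCast_dvd (p : ℤ) z).2 ⟨Int.natCast_dvd.2 hre, Int.natCast_dvd.2 him⟩

theorem odd_norm_of_isCoprime_two {z : ℤ√d} (h : IsCoprime 2 z) : Odd z.norm := by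
  have hnorm : IsCoprime (2 : ℤ√d) (z.norm : ℤ√d) := by
    rw [norm_eq_mul_conj]
    exact h.mul_right (by simpa [starRingEnd_apply] using h.map (starRingEnd (ℤ√d)))
  rw [← Int.not_even_iff_odd, even_iff_two_dvd]
  intro h2
  have h2unit : IsUnit ((2 : ℤ) : ℤ√d) :=
    hnorm.isUnit_of_dvd' (by norm_num) (by exact_mod_cast h2)
  rw [isUnit_iff_norm_isUnit, norm_intCast, Int.isUnit_iff] at h2unit
  omega

theorem dvd_of_dvd_of_norm_eq {z a b : ℤ√d} (hz : IsCoprime z (star z)) (ha : a ∣ z)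
    (hb : b ∣ z) (hab : a.norm = b.norm) : a ∣ b := by
  have hcop : IsCoprime a (star b) :=
    (hz.of_isCoprime_of_dvd_left ha).of_isCoprime_of_dvd_right (map_dvd (starRingEnd _) hb)
  refine hcop.dvd_of_dvd_mul_right ?_
  rw [← norm_eq_mul_conj, ← hab, norm_eq_mul_conj]
  exact dvd_mul_right a _

end Zsqrtd

namespace GaussianInt

open Zsqrtd

theorem associated_of_dvd_of_norm_eq {z a b : GaussianInt} (hz : IsCoprime z (star z))
    (ha : a ∣ z) (hb : b ∣ z) (hab : a.norm = b.norm) : Associated a b :=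
  associated_of_dvd_dvd (dvd_of_dvd_of_norm_eq hz ha hb hab)
    (dvd_of_dvd_of_norm_eq hz hb ha hab.symm)

theorem re_mul_sqrtd (x : GaussianInt) : (x * sqrtd).re = -x.im := by simp

theorem im_mul_sqrtd (x : GaussianInt) : (x * sqrtd).im = x.re := by simp

theorem isUnit_iff {u : GaussianInt} : IsUnit u ↔ u = 1 ∨ u = -1 ∨ u = sqrtd ∨ u = -sqrtd := by
  refine ⟨fun hu => ?_, ?_⟩
  · have h := (norm_eq_one_iff' (by norm_num) u).2 hu
    obtain ⟨a, b⟩ := u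
    simp only [norm_def, neg_mul, one_mul, sub_neg_eq_add] at h
    obtain ⟨ha₁, ha₂⟩ : -1 ≤ a ∧ a ≤ 1 := by constructor <;> nlinarith
    obtain ⟨hb₁, hb₂⟩ : -1 ≤ b ∧ b ≤ 1 := by constructor <;> nlinarith
    interval_cases a <;> interval_cases b <;> simp_all [Zsqrtd.ext_iff]
  · have hi : IsUnit (sqrtd : GaussianInt) := (norm_eq_one_iff' (by norm_num) _).1 rfl
    rintro (rfl | rfl | rfl | rfl)
    exacts [isUnit_one, isUnit_one.neg, hi, hi.neg]

theorem associated_iff {x y : GaussianInt} :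
    Associated x y ↔ y = x ∨ y = -x ∨ y = x * sqrtd ∨ y = -(x * sqrtd) := by
  refine ⟨fun ⟨u, hu⟩ => ?_, ?_⟩
  · rcases isUnit_iff.1 u.isUnit with h | h | h | h <;> simp [← hu, h]
  · have hi : IsUnit (sqrtd : GaussianInt) := isUnit_iff.2 (by simp)
    rintro (rfl | rfl | rfl | rfl)
    exacts [.refl _, (Associated.refl _).neg_right, associated_mul_unit_right _ _ hi,
      (associated_mul_unit_right _ _ hi).neg_right]

theorem ncard_setOf_associated {x : GaussianInt} (hx : x ≠ 0) :
    {y | Associated x y}.ncard = 4 := by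
  have hx' : x.re ≠ 0 ∨ x.im ≠ 0 := by
    by_contra! h
    exact hx (Zsqrtd.ext h.1 h.2)
  rw [Set.ncard_eq_four]
  refine ⟨x, -x, x * sqrtd, -(x * sqrtd), ?_, ?_, ?_, ?_, ?_, ?_,
    by ext y; simp [associated_iff]⟩ <;>
    simp only [ne_eq, Zsqrtd.ext_iff, re_neg, im_neg, re_mul_sqrtd, im_mul_sqrtd] <;> omega

theorem existsUnique_associated_pos_odd_re {x : GaussianInt} (hx : Odd x.norm) :
    ∃! y, Associated x y ∧ 0 < y.re ∧ Odd y.re := by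
  have hpar : Odd (x.re + x.im) := by
    simpa [norm_def, Int.odd_add, Int.odd_sub, Int.odd_mul, Int.even_add, Int.even_mul] using hx
  simp only [associated_iff, Int.odd_iff] at hpar ⊢
  refine existsUnique_of_exists_of_unique ?_ ?_
  · have hcase : (0 < x.re ∧ x.re % 2 = 1) ∨ (0 < -x.re ∧ -x.re % 2 = 1) ∨
        (0 < -x.im ∧ -x.im % 2 = 1) ∨ (0 < x.im ∧ x.im % 2 = 1) := by omega
    rcases hcase with h | h | h | h
    · exact ⟨x, by simp, h⟩
    · exact ⟨-x, by simp, by simpa using h⟩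
    · exact ⟨x * sqrtd, by simp, by simpa using h⟩
    · exact ⟨-(x * sqrtd), by simp, by simpa using h⟩
  · rintro y₁ y₂ ⟨h₁ | h₁ | h₁ | h₁, p₁, o₁⟩ ⟨h₂ | h₂ | h₂ | h₂, p₂, o₂⟩ <;> subst h₁ h₂ <;>
      simp only [re_neg, re_mul_sqrtd] at * <;> first | rfl | omega

theorem isCoprime_star_self {γ : GaussianInt} (hγ : IsCoprime γ.re γ.im) (h2 : IsCoprime 2 γ) :
    IsCoprime γ (star γ) := by
  obtain ⟨u, v, huv⟩ := hγ
  have h : (2 : GaussianInt) =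
      star γ * (u + v * sqrtd (d := -1)) + γ * (u - v * sqrtd (d := -1)) := by
    ext <;> simp only [re_ofNat, im_ofNat, re_add, im_add, re_sub, im_sub, re_mul, im_mul, re_star,
      im_star, re_intCast, im_intCast, re_sqrtd, im_sqrtd]
    · linear_combination -2 * huv
    · ring
  rw [h] at h2
  exact h2.of_add_mul_left_left.of_mul_left_left.symm

theorem exists_dvd_norm_eq {γ : GaussianInt} (hγ : IsCoprime γ (star γ)) {m : ℤ} (hm₀ : 0 ≤ m)
    (hm : m ∣ γ.norm) : ∃ l, l ∣ γ ∧ l.norm = m := by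
  set g := EuclideanDomain.gcd γ (m : GaussianInt)
  have hgγ : g ∣ γ := EuclideanDomain.gcd_dvd_left _ _
  have hgm : g ∣ m := EuclideanDomain.gcd_dvd_right _ _
  have hstar : star g ∣ m := by
    simpa [starRingEnd_apply] using map_dvd (starRingEnd GaussianInt) hgm
  have h₁ : (g.norm : GaussianInt) ∣ m := by
    rw [norm_eq_mul_conj]
    exact ((hγ.of_isCoprime_of_dvd_left hgγ).of_isCoprime_of_dvd_right
      (map_dvd (starRingEnd _) hgγ)).mul_dvd hgm hstar
  have h₂ : (m : GaussianInt) ∣ g.norm := by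
    have hγm : (m : GaussianInt) ∣ γ * star γ := by
      rw [← norm_eq_mul_conj]
      exact_mod_cast hm
    set A := EuclideanDomain.gcdA γ (m : GaussianInt)
    set B := EuclideanDomain.gcdB γ (m : GaussianInt)
    have hg : g = γ * A + m * B := EuclideanDomain.gcd_eq_gcd_ab _ _
    have hexpand : g * star g = γ * star γ * (A * star A) + m * (γ * A * star B + B * star g) := by
      rw [hg]
      simp only [star_add, star_mul, star_intCast]
      ring
    rw [norm_eq_mul_conj, hexpand]
    exact dvd_add (dvd_mul_of_dvd_left hγm _) (dvd_mul_right _ _)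
  exact ⟨g, hgγ, Int.dvd_antisymm (norm_nonneg g) hm₀ (by exact_mod_cast h₁)
    (by exact_mod_cast h₂)⟩

end GaussianInt

open GaussianInt Zsqrtd

theorem stmt_2_general (γ : GaussianInt)
    (hprim : ∀ p : ℕ, p.Prime → ¬ ((p : GaussianInt) ∣ γ))
    (hcop : IsCoprime (2 : GaussianInt) γ)
    (m : ℕ) (hdvd : (m : ℤ) ∣ γ.norm) :
    {l : GaussianInt | l ∣ γ ∧ l.norm = (m : ℤ)}.ncard = 4 ∧
      (∀ l₁ l₂ : GaussianInt, l₁ ∣ γ → l₁.norm = (m : ℤ) →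
        l₂ ∣ γ → l₂.norm = (m : ℤ) → Associated l₁ l₂) ∧
      ∃! l : GaussianInt, (l ∣ γ ∧ l.norm = (m : ℤ)) ∧ 0 < l.re ∧ Odd l.re := by
  have hγ : IsCoprime γ (star γ) :=
    isCoprime_star_self (isCoprime_re_im_of_not_natCast_dvd hprim) hcop
  obtain ⟨l, hlγ, hlm⟩ := exists_dvd_norm_eq hγ (Int.natCast_nonneg m) hdvd
  have hdvd_iff : ∀ x, (x ∣ γ ∧ x.norm = m) ↔ Associated l x := fun x =>
    ⟨fun ⟨hx, hxm⟩ => associated_of_dvd_of_norm_eq hγ hlγ hx (hlm.trans hxm.symm),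
      fun h => ⟨h.symm.dvd.trans hlγ, (norm_eq_of_associated (by norm_num) h).symm.trans hlm⟩⟩
  have hodd : Odd l.norm := by
    have hγodd := odd_norm_of_isCoprime_two hcop
    rw [← Int.not_even_iff_odd, even_iff_two_dvd] at hγodd ⊢
    exact fun h2 => hγodd (h2.trans (hlm ▸ hdvd))
  have hl : l ≠ 0 := by
    rintro rfl
    simp at hodd
  refine ⟨by rw [Set.ext hdvd_iff]; exact ncard_setOf_associated hl,
    fun l₁ l₂ h₁ n₁ h₂ n₂ => associated_of_dvd_of_norm_eq hγ h₁ h₂ (n₁.trans n₂.symm), ?_⟩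
  simpa only [hdvd_iff] using existsUnique_associated_pos_odd_re hodd

/-- If `γ ∈ ℤ[i]` is primitive (divisible by no rational prime) and coprime to `2`,
and `m` is a positive integer dividing `N(γ)`, then the set of divisors `l` of `γ`
with `N(l) = m` has exactly four elements, all mutually associate, and exactly one
of them has positive odd real part. -/
theorem stmt_2 (γ : GaussianInt)
    (hprim : ∀ p : ℕ, p.Prime → ¬ ((p : GaussianInt) ∣ γ))
    (hcop : IsCoprime (2 : GaussianInt) γ)
    (m : ℕ) (hm : 0 < m) (hdvd : (m : ℤ) ∣ γ.norm) :
    {l : GaussianInt | l ∣ γ ∧ l.norm = (m : ℤ)}.ncard = 4 ∧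
      (∀ l₁ l₂ : GaussianInt, l₁ ∣ γ → l₁.norm = (m : ℤ) →
        l₂ ∣ γ → l₂.norm = (m : ℤ) → Associated l₁ l₂) ∧
      ∃! l : GaussianInt, (l ∣ γ ∧ l.norm = (m : ℤ)) ∧ 0 < l.re ∧ Odd l.re :=
  stmt_2_general γ hprim hcop m hdvd
end

section
/- Let z₁, z₂ be Gaussian integers and q₁, q₂ integers with Δ := Im(z̄₁ z₂) ≠ 0, and suppose q₁ z₂ ≡ q₂ z₁ (mod Δ) in ℤ[i]. Then w := −i Δ^{−1}(q₁ z₂ − q₂ z₁) is a Gaussian integer satisfying Re(w̄ z₁) = q₁ and Re(w̄ z₂) = q₂. -/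
/-- If `Δ = Im(conj z₁ · z₂) ≠ 0` and `Δ ∣ q₁ z₂ − q₂ z₁` in `ℤ[i]`, then
`w = −i Δ⁻¹ (q₁ z₂ − q₂ z₁)` is a Gaussian integer with `Re(conj w · z₁) = q₁` and
`Re(conj w · z₂) = q₂`. -/
theorem stmt_6 (z₁ z₂ : GaussianInt) (q₁ q₂ : ℤ)
    (hΔ : (star z₁ * z₂).im ≠ 0)
    (hdvd : ((star z₁ * z₂).im : GaussianInt) ∣
      ((q₁ : GaussianInt) * z₂ - (q₂ : GaussianInt) * z₁)) :
    ∃ w : GaussianInt,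
      ((star z₁ * z₂).im : GaussianInt) * w =
        -Zsqrtd.sqrtd * ((q₁ : GaussianInt) * z₂ - (q₂ : GaussianInt) * z₁) ∧
      (star w * z₁).re = q₁ ∧ (star w * z₂).re = q₂ := by
  obtain ⟨u, hu⟩ := hdvd
  refine ⟨-Zsqrtd.sqrtd * u, ?_, ?_, ?_⟩
  · rw [show ((star z₁ * z₂).im : GaussianInt) * (-Zsqrtd.sqrtd * u) =
      -Zsqrtd.sqrtd * (((star z₁ * z₂).im : GaussianInt) * u) by ring, ← hu]
  · have h1 := congrArg Zsqrtd.re hu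
    have h2 := congrArg Zsqrtd.im hu
    simp [Zsqrtd.re_mul, Zsqrtd.im_mul, Zsqrtd.ext_iff] at h1 h2 ⊢
    apply mul_left_cancel₀ hΔ
    simp only [Zsqrtd.im_mul, Zsqrtd.re_star, Zsqrtd.im_star]
    linear_combination z₁.im * h1 - z₁.re * h2
  · have h1 := congrArg Zsqrtd.re hu
    have h2 := congrArg Zsqrtd.im hu
    simp [Zsqrtd.re_mul, Zsqrtd.im_mul, Zsqrtd.ext_iff] at h1 h2 ⊢
    apply mul_left_cancel₀ hΔ
    simp only [Zsqrtd.im_mul, Zsqrtd.re_star, Zsqrtd.im_star]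
    linear_combination z₂.im * h1 - z₂.re * h2
end

section
/- Fix a positive integer d. For all positive integers f, the sum C(d,f) := Σ_{ek = f} (d·e·μ(k))/φ(d·e) equals d·μ(f)²/φ(d·f) if gcd(d,f) = 1, and equals 0 if gcd(d,f) > 1. -/
open scoped ArithmeticFunction ArithmeticFunction.Moebius
open Finset ArithmeticFunction

/-!
Since `n / φ(n) = ∏_{p ∣ n} (1 - 1/p)⁻¹`, we have `d e / φ(d e) = (d / φ(d)) · g_d(e)`
with `g_d(e) = ∏_{p ∣ e, p ∤ d} (1 - 1/p)⁻¹` (`awayRatio d`) multiplicative, so the sum is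
`d / φ(d) · (g_d * μ)(f)`.
The convolution `g_d * μ` is multiplicative, and at `p^k` it equals `g_d(p^k) - g_d(p^(k-1))`:
this is `1 / (p - 1)` for `k = 1`, `p ∤ d`, and `0` otherwise. Hence `(g_d * μ)(f)` is
`μ(f)² / φ(f)` if `gcd(d, f) = 1` and `0` otherwise, and `φ(d) φ(f) = φ(d f)` finishes.
-/

theorem Nat.cast_div_totient {n : ℕ} (hn : n ≠ 0) :
    (n : ℚ) / n.totient = ∏ p ∈ n.primeFactors, (1 - (p : ℚ)⁻¹)⁻¹ := by
  rw [Nat.totient_eq_mul_prod_factors, prod_inv_distrib, div_mul_cancel_left₀ (by simpa)]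

theorem Nat.cast_totient_of_squarefree {n : ℕ} (hn : Squarefree n) :
    (n.totient : ℚ) = ∏ p ∈ n.primeFactors, ((p : ℚ) - 1) := by
  have hprod : (n : ℚ) = ∏ p ∈ n.primeFactors, (p : ℚ) := by
    rw [← Nat.cast_prod, Nat.prod_primeFactors_of_squarefree hn]
  rw [Nat.totient_eq_mul_prod_factors, hprod, ← prod_mul_distrib]
  refine prod_congr rfl fun p hp => ?_
  have : (p : ℚ) ≠ 0 := by exact_mod_cast (Nat.prime_of_mem_primeFactors hp).ne_zero
  field_simp

theorem Finset.prod_union_eq_mul_prod_ite {ι M : Type*} [DecidableEq ι] [CommMonoid M]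
    (s t : Finset ι) (f : ι → M) :
    ∏ i ∈ s ∪ t, f i = (∏ i ∈ s, f i) * ∏ i ∈ t, if i ∈ s then 1 else f i := by
  rw [← union_sdiff_self_eq_union, prod_union disjoint_sdiff, prod_ite, prod_const_one,
    one_mul, filter_notMem_eq_sdiff]

theorem ArithmeticFunction.mul_moebius_apply_prime_pow_succ {R : Type*} [CommRing R]
    (g : ArithmeticFunction R) {p : ℕ} (hp : p.Prime) (k : ℕ) :
    (g * μ) (p ^ (k + 1)) = g (p ^ (k + 1)) - g (p ^ k) := by
  rw [mul_comm, mul_apply,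
    Nat.sum_divisorsAntidiagonal (fun a b => (μ : ArithmeticFunction R) a * g b),
    Nat.sum_divisors_prime_pow hp, sum_range_succ', sum_range_succ']
  have hvanish : ∀ i ∈ range k,
      (μ : ArithmeticFunction R) (p ^ (i + 2)) * g (p ^ (k + 1) / p ^ (i + 2)) = 0 := by
    intro i _
    rw [intCoe_apply, moebius_apply_prime_pow hp (by omega), if_neg (by omega)]
    simp
  rw [sum_eq_zero hvanish, Nat.pow_div (by omega) hp.pos, Nat.pow_div (by omega) hp.pos]
  simp [moebius_apply_prime hp, sub_eq_add_neg, add_comm]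

noncomputable def awayRatio (d : ℕ) : ArithmeticFunction ℚ :=
  prodPrimeFactors fun p => if p ∣ d then 1 else (1 - (p : ℚ)⁻¹)⁻¹

section awayRatio

variable {d : ℕ}

theorem isMultiplicative_awayRatio (d : ℕ) : (awayRatio d).IsMultiplicative :=
  IsMultiplicative.prodPrimeFactors _

theorem isMultiplicative_awayRatio_mul_moebius (d : ℕ) :
    (awayRatio d * μ).IsMultiplicative :=
  (isMultiplicative_awayRatio d).mul isMultiplicative_moebius.intCast

theorem cast_mul_div_totient_mul (hd : d ≠ 0) {e : ℕ} (he : e ≠ 0) :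
    ((d * e : ℕ) : ℚ) / (d * e).totient = d / d.totient * awayRatio d e := by
  rw [Nat.cast_div_totient (mul_ne_zero hd he), Nat.cast_div_totient hd, awayRatio,
    prodPrimeFactors_apply he, Nat.primeFactors_mul hd he, prod_union_eq_mul_prod_ite]
  congr 1
  refine prod_congr rfl fun p hp => ?_
  simp only [Nat.mem_primeFactors, Nat.prime_of_mem_primeFactors hp, ne_eq, hd, not_false_eq_true,
    true_and, and_true]

theorem sum_divisors_eq_mul_awayRatio_mul_moebius (hd : d ≠ 0) (f : ℕ) :
    ∑ e ∈ f.divisors, (d : ℚ) * e * μ (f / e) / (d * e).totient =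
      d / d.totient * (awayRatio d * μ) f := by
  rw [mul_apply,
    Nat.sum_divisorsAntidiagonal (fun a b => awayRatio d a * (μ : ArithmeticFunction ℚ) b),
    mul_sum]
  refine sum_congr rfl fun e he => ?_
  rw [mul_div_right_comm, ← Nat.cast_mul,
    cast_mul_div_totient_mul hd (Nat.pos_of_mem_divisors he).ne', mul_assoc, intCoe_apply]

theorem awayRatio_apply_prime_pow {p k : ℕ} (hp : p.Prime) (hk : k ≠ 0) :
    awayRatio d (p ^ k) = if p ∣ d then 1 else (1 - (p : ℚ)⁻¹)⁻¹ := by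
  rw [awayRatio, prodPrimeFactors_apply (pow_ne_zero _ hp.ne_zero),
    Nat.primeFactors_prime_pow hk hp, prod_singleton]

theorem awayRatio_mul_moebius_apply_prime_pow {p k : ℕ} (hp : p.Prime) (hk : k ≠ 0) :
    (awayRatio d * μ) (p ^ k) = if k = 1 ∧ ¬p ∣ d then ((p : ℚ) - 1)⁻¹ else 0 := by
  obtain ⟨j, rfl⟩ := Nat.exists_eq_add_one.mpr (Nat.pos_of_ne_zero hk)
  rw [mul_moebius_apply_prime_pow_succ _ hp, awayRatio_apply_prime_pow hp hk]
  rcases j with _ | j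
  · rw [pow_zero, (isMultiplicative_awayRatio d).map_one]
    by_cases hpd : p ∣ d
    · simp [hpd]
    · have hp1 : (p : ℚ) - 1 ≠ 0 := sub_ne_zero.mpr (by exact_mod_cast hp.ne_one)
      have hp0 : (p : ℚ) ≠ 0 := by exact_mod_cast hp.ne_zero
      simp only [hpd, if_false, not_false_eq_true, and_self, if_true]
      field_simp
      ring
  · rw [awayRatio_apply_prime_pow hp (by omega), sub_self, if_neg (by omega)]

theorem forall_factorization_eq_one_and_not_dvd_iff {f : ℕ} (hf : f ≠ 0) :
    (∀ p ∈ f.primeFactors, f.factorization p = 1 ∧ ¬p ∣ d) ↔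
      d.Coprime f ∧ Squarefree f := by
  rw [Nat.squarefree_iff_factorization_le_one hf]
  constructor
  · intro h
    refine ⟨Nat.coprime_of_dvd fun p hp hpd hpf =>
      (h p (Nat.mem_primeFactors.mpr ⟨hp, hpf, hf⟩)).2 hpd, fun p => ?_⟩
    by_cases hp : p ∈ f.primeFactors
    · exact (h p hp).1.le
    · rw [← Nat.support_factorization, Finsupp.notMem_support_iff] at hp
      omega
  · rintro ⟨hcop, hsq⟩ p hp
    have hpf := Nat.dvd_of_mem_primeFactors hp
    have hp := Nat.prime_of_mem_primeFactors hp
    exact ⟨le_antisymm (hsq p) (hp.factorization_pos_of_dvd hf hpf),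
      fun hpd => hp.ne_one (Nat.eq_one_of_dvd_coprimes hcop hpd hpf)⟩

theorem awayRatio_mul_moebius_apply {f : ℕ} (hf : f ≠ 0) :
    (awayRatio d * μ) f = if d.Coprime f ∧ Squarefree f then (f.totient : ℚ)⁻¹ else 0 := by
  rw [(isMultiplicative_awayRatio_mul_moebius d).multiplicative_factorization _ hf, Finsupp.prod,
    Nat.support_factorization]
  rw [prod_congr rfl fun p hp => awayRatio_mul_moebius_apply_prime_pow
      (Nat.prime_of_mem_primeFactors hp)
      (Finsupp.mem_support_iff.mp (f.support_factorization ▸ hp)),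
    prod_ite_zero]
  by_cases h : d.Coprime f ∧ Squarefree f
  · rw [if_pos ((forall_factorization_eq_one_and_not_dvd_iff hf).mpr h), if_pos h,
      Nat.cast_totient_of_squarefree h.2, prod_inv_distrib]
  · rw [if_neg (mt (forall_factorization_eq_one_and_not_dvd_iff hf).mp h), if_neg h]

end awayRatio

theorem stmt_8_general (d f : ℕ) :
    (∑ e ∈ f.divisors, ((d : ℚ) * e * (μ (f / e) : ℚ)) / ((d * e).totient : ℚ)) =
      if Nat.gcd d f = 1 then (d : ℚ) * (μ f : ℚ) ^ 2 / ((d * f).totient : ℚ) else 0 := by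
  obtain rfl | hd := eq_or_ne d 0
  · simp
  obtain rfl | hf := eq_or_ne f 0
  · simp
  rw [sum_divisors_eq_mul_awayRatio_mul_moebius hd, awayRatio_mul_moebius_apply hf]
  by_cases hdf : d.Coprime f
  · by_cases hsq : Squarefree f
    · rw [if_pos ⟨hdf, hsq⟩, if_pos hdf]
      have hμ : ((μ f : ℤ) : ℚ) ^ 2 = 1 := by
        exact_mod_cast moebius_sq_eq_one_of_squarefree hsq
      rw [Nat.totient_mul hdf, hμ, Nat.cast_mul]
      ring
    · simp [hdf, hsq, moebius_eq_zero_of_not_squarefree hsq]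
  · simp [hdf]

/-- `C(d,f) = Σ_{ek=f} d·e·μ(k)/φ(d·e)` equals `d·μ(f)²/φ(d·f)` when `gcd(d,f)=1`
and `0` otherwise. -/
theorem stmt_8 (d f : ℕ) (hd : 0 < d) (hf : 0 < f) :
    (∑ e ∈ f.divisors, ((d : ℚ) * e * (μ (f / e) : ℚ)) / ((d * e).totient : ℚ)) =
      if Nat.gcd d f = 1 then (d : ℚ) * (μ f : ℚ) ^ 2 / ((d * f).totient : ℚ) else 0 :=
  stmt_8_general d f
end

section
/- For any integer D ≥ 1 and real x ≥ 2, Σ_{m ≤ x} τ(m)² · gcd(m, D²) ≪ x · τ(D)⁶ · (log x)³, with an absolute implied constant. -/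
open Finset

lemma tau_mul_le_s11 (m n : ℕ) (hm : m ≠ 0) (hn : n ≠ 0) :
    (m * n).divisors.card ≤ m.divisors.card * n.divisors.card := by
  have hsub : (m * n).divisors ⊆ (m.divisors ×ˢ n.divisors).image (fun p => p.1 * p.2) := by
    intro d hd
    rw [Nat.mem_divisors] at hd
    obtain ⟨a, b, ha, hb, rfl⟩ := exists_dvd_and_dvd_of_dvd_mul hd.1
    exact Finset.mem_image.2 ⟨(a, b), Finset.mem_product.2
      ⟨Nat.mem_divisors.2 ⟨ha, hm⟩, Nat.mem_divisors.2 ⟨hb, hn⟩⟩, rfl⟩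
  calc (m * n).divisors.card ≤ _ := Finset.card_le_card hsub
    _ ≤ (m.divisors ×ˢ n.divisors).card := Finset.card_image_le
    _ = _ := by rw [Finset.card_product]

lemma harmonic_mono {m n : ℕ} (h : m ≤ n) : harmonic m ≤ harmonic n := by
  unfold harmonic
  exact Finset.sum_le_sum_of_subset_of_nonneg (Finset.range_subset_range.2 h)
    (fun i _ _ => by positivity)

lemma harmonic_nonneg (n : ℕ) : (0:ℚ) ≤ harmonic n := by
  unfold harmonic; positivity

lemma divisors_eq_filter {m N : ℕ} (h1 : 1 ≤ m) (h2 : m ≤ N) :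
    m.divisors = (Finset.Icc 1 N).filter (· ∣ m) := by
  ext d
  simp only [Nat.mem_divisors, Finset.mem_filter, Finset.mem_Icc]
  constructor
  · rintro ⟨hd, -⟩
    have hd0 : d ≠ 0 := by rintro rfl; rw [zero_dvd_iff] at hd; omega
    exact ⟨⟨by omega, (Nat.le_of_dvd (by omega) hd).trans h2⟩, hd⟩
  · rintro ⟨-, hd⟩; exact ⟨hd, by omega⟩

lemma filter_dvd_eq_image (N d : ℕ) (hd : 1 ≤ d) :
    (Finset.Icc 1 N).filter (d ∣ ·) = (Finset.Icc 1 (N / d)).image (d * ·) := by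
  ext a
  simp only [Finset.mem_filter, Finset.mem_Icc, Finset.mem_image]
  constructor
  · rintro ⟨⟨h1, h2⟩, k, rfl⟩
    have hc : d * k = k * d := Nat.mul_comm d k
    refine ⟨k, ⟨by nlinarith, (Nat.le_div_iff_mul_le (by omega)).2 (by omega)⟩, rfl⟩
  · rintro ⟨k, ⟨hk1, hk2⟩, rfl⟩
    have := (Nat.le_div_iff_mul_le (show 0 < d by omega)).1 hk2
    have hc : d * k = k * d := Nat.mul_comm d k
    exact ⟨⟨by nlinarith, by omega⟩, ⟨k, rfl⟩⟩

lemma sum_inv_multiples_le (N d : ℕ) (hd : 1 ≤ d) :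
    ∑ a ∈ (Finset.Icc 1 N).filter (d ∣ ·), (1 : ℝ) / a ≤ (harmonic N : ℝ) / d := by
  rw [filter_dvd_eq_image N d hd,
    Finset.sum_image (fun x _ y _ h => Nat.eq_of_mul_eq_mul_left (by omega) h)]
  have h1 : ∑ k ∈ Finset.Icc 1 (N / d), (1 : ℝ) / (d * k) = (harmonic (N/d) : ℝ) / d := by
    rw [harmonic_eq_sum_Icc]
    push_cast
    rw [Finset.sum_div]
    refine Finset.sum_congr rfl fun k hk => ?_
    rw [Finset.mem_Icc] at hk
    have hk0 : (k:ℝ) ≠ 0 := by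
      have : 1 ≤ k := hk.1
      positivity
    have hd0 : (d:ℝ) ≠ 0 := by positivity
    field_simp
  push_cast
  rw [h1]
  have hd0 : (0:ℝ) < d := by positivity
  gcongr
  exact_mod_cast harmonic_mono (Nat.div_le_self N d)

lemma sum_tau_sq_le (N : ℕ) :
    ∑ m ∈ Finset.Icc 1 N, ((m.divisors.card : ℝ)) ^ 2 ≤ (N : ℝ) * (harmonic N : ℝ) ^ 3 := by
  set I := Finset.Icc 1 N with hI
  set H : ℝ := (harmonic N : ℝ) with hH
  have hH0 : 0 ≤ H := by rw [hH]; exact_mod_cast harmonic_nonneg N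
  have key1 : ∀ a b : ℕ,
      ∑ m ∈ I, ((if a ∣ m then (1:ℝ) else 0) * (if b ∣ m then (1:ℝ) else 0))
      = ((N / Nat.lcm a b : ℕ) : ℝ) := by
    intro a b
    have hpt : ∀ m : ℕ, (if a ∣ m then (1:ℝ) else 0) * (if b ∣ m then (1:ℝ) else 0)
        = if Nat.lcm a b ∣ m then (1:ℝ) else 0 := by
      intro m
      by_cases h1 : a ∣ m <;> by_cases h2 : b ∣ m <;>
        simp [h1, h2, Nat.lcm_dvd_iff]
    simp_rw [hpt]
    have hIoc : Finset.Icc 1 N = Finset.Ioc 0 N := by ext t; simp; omega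
    rw [Finset.sum_boole, hI, hIoc, Nat.Ioc_filter_dvd_card_eq_div]
  have key2 : ∀ a ∈ I, ∀ b ∈ I, ((N / Nat.lcm a b : ℕ) : ℝ)
      ≤ ∑ d ∈ I, (if d ∣ a then (1:ℝ)/a else 0) * (if d ∣ b then (1:ℝ)/b else 0) * ((N:ℝ)*d) := by
    intro a ha b hb
    rw [hI, Finset.mem_Icc] at ha hb
    have ha0 : (0:ℝ) < a := by exact_mod_cast ha.1
    have hb0 : (0:ℝ) < b := by exact_mod_cast hb.1
    have hg1 : 1 ≤ Nat.gcd a b := Nat.one_le_iff_ne_zero.2 (Nat.gcd_ne_zero_left (by omega))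
    have hgmem : Nat.gcd a b ∈ I.filter (fun d => d ∣ a ∧ d ∣ b) := by
      rw [Finset.mem_filter, hI, Finset.mem_Icc]
      exact ⟨⟨hg1, (Nat.le_of_dvd (by omega) (Nat.gcd_dvd_left a b)).trans ha.2⟩,
        Nat.gcd_dvd_left a b, Nat.gcd_dvd_right a b⟩
    have hlc : 1 ≤ Nat.lcm a b := Nat.one_le_iff_ne_zero.2 (Nat.lcm_ne_zero (by omega) (by omega))
    have hl : (Nat.gcd a b : ℝ) * (Nat.lcm a b : ℝ) = (a:ℝ) * b := by
      exact_mod_cast congrArg (Nat.cast : ℕ → ℝ) (Nat.gcd_mul_lcm a b)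
    have hlcm0 : (0:ℝ) < (Nat.lcm a b : ℝ) := by exact_mod_cast hlc
    calc ((N / Nat.lcm a b : ℕ) : ℝ) ≤ (N:ℝ) / (Nat.lcm a b : ℝ) := Nat.cast_div_le
      _ = (N:ℝ) * (Nat.gcd a b : ℝ) / ((a:ℝ) * b) := by
          rw [div_eq_div_iff hlcm0.ne' (by positivity : ((a:ℝ)*b) ≠ 0)]
          nlinarith [hl]
      _ ≤ (N:ℝ) * (∑ d ∈ I.filter (fun d => d ∣ a ∧ d ∣ b), (d:ℝ)) / ((a:ℝ) * b) := by
          gcongr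
          exact Finset.single_le_sum (f := fun d : ℕ => (d:ℝ))
            (fun i _ => by positivity) hgmem
      _ = ∑ d ∈ I.filter (fun d => d ∣ a ∧ d ∣ b), (N:ℝ) * d / ((a:ℝ) * b) := by
          rw [Finset.mul_sum, Finset.sum_div]
      _ = ∑ d ∈ I, (if d ∣ a ∧ d ∣ b then (N:ℝ) * d / ((a:ℝ) * b) else 0) :=
          Finset.sum_filter _ _
      _ = ∑ d ∈ I, (if d ∣ a then (1:ℝ)/a else 0) * (if d ∣ b then (1:ℝ)/b else 0) * ((N:ℝ)*d) := by
          refine Finset.sum_congr rfl fun d _ => ?_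
          by_cases h1 : d ∣ a <;> by_cases h2 : d ∣ b <;>
            simp [h1, h2] <;> field_simp <;> ring
  have hτ : ∀ m ∈ I, (m.divisors.card : ℝ) = ∑ a ∈ I, (if a ∣ m then (1:ℝ) else 0) := by
    intro m hm
    rw [hI, Finset.mem_Icc] at hm
    rw [divisors_eq_filter hm.1 hm.2, ← hI, Finset.sum_boole]
  have hSnonneg : ∀ d : ℕ, 0 ≤ ∑ a ∈ I, (if d ∣ a then (1:ℝ)/a else 0) :=
    fun d => Finset.sum_nonneg fun a ha => by
      split
      · rw [hI, Finset.mem_Icc] at ha; positivity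
      · exact le_refl 0
  have hHsum : ∑ d ∈ I, (1:ℝ)/d = H := by
    rw [hH, harmonic_eq_sum_Icc, hI]
    push_cast
    simp [one_div]
  calc ∑ m ∈ I, ((m.divisors.card : ℝ)) ^ 2
      = ∑ m ∈ I, ∑ a ∈ I, ∑ b ∈ I,
          ((if a ∣ m then (1:ℝ) else 0) * (if b ∣ m then (1:ℝ) else 0)) := by
        refine Finset.sum_congr rfl fun m hm => ?_
        rw [hτ m hm, sq, Finset.sum_mul_sum]
    _ = ∑ a ∈ I, ∑ b ∈ I, ∑ m ∈ I,
          ((if a ∣ m then (1:ℝ) else 0) * (if b ∣ m then (1:ℝ) else 0)) := by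
        rw [Finset.sum_comm]
        exact Finset.sum_congr rfl fun a _ => Finset.sum_comm
    _ = ∑ a ∈ I, ∑ b ∈ I, ((N / Nat.lcm a b : ℕ) : ℝ) :=
        Finset.sum_congr rfl fun a _ => Finset.sum_congr rfl fun b _ => key1 a b
    _ ≤ ∑ a ∈ I, ∑ b ∈ I, ∑ d ∈ I,
          (if d ∣ a then (1:ℝ)/a else 0) * (if d ∣ b then (1:ℝ)/b else 0) * ((N:ℝ)*d) :=
        Finset.sum_le_sum fun a ha => Finset.sum_le_sum fun b hb => key2 a ha b hb
    _ = ∑ d ∈ I, ∑ a ∈ I, ∑ b ∈ I,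
          (if d ∣ a then (1:ℝ)/a else 0) * (if d ∣ b then (1:ℝ)/b else 0) * ((N:ℝ)*d) := by
        rw [show (∑ a ∈ I, ∑ b ∈ I, ∑ d ∈ I,
          (if d ∣ a then (1:ℝ)/a else 0) * (if d ∣ b then (1:ℝ)/b else 0) * ((N:ℝ)*d))
          = ∑ a ∈ I, ∑ d ∈ I, ∑ b ∈ I,
          (if d ∣ a then (1:ℝ)/a else 0) * (if d ∣ b then (1:ℝ)/b else 0) * ((N:ℝ)*d)
          from Finset.sum_congr rfl fun a _ => Finset.sum_comm]
        exact Finset.sum_comm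
    _ = ∑ d ∈ I, ((∑ a ∈ I, if d ∣ a then (1:ℝ)/a else 0)
          * (∑ b ∈ I, if d ∣ b then (1:ℝ)/b else 0)) * ((N:ℝ)*d) := by
        refine Finset.sum_congr rfl fun d _ => ?_
        rw [Finset.sum_mul_sum, Finset.sum_mul]
        exact Finset.sum_congr rfl fun a _ => by rw [Finset.sum_mul]
    _ ≤ ∑ d ∈ I, ((H/d) * (H/d)) * ((N:ℝ)*d) := by
        refine Finset.sum_le_sum fun d hd => ?_
        rw [hI, Finset.mem_Icc] at hd
        have hd0 : (0:ℝ) < d := by exact_mod_cast hd.1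
        have hSa : (∑ a ∈ I, if d ∣ a then (1:ℝ)/a else 0) ≤ H/d := by
          rw [← Finset.sum_filter]
          exact sum_inv_multiples_le N d hd.1
        have := hSnonneg d
        have hHd : (0:ℝ) ≤ H/d := by positivity
        apply mul_le_mul_of_nonneg_right _ (by positivity)
        exact mul_le_mul hSa hSa (hSnonneg d) hHd
    _ = ∑ d ∈ I, (N:ℝ) * H^2 * ((1:ℝ)/d) := by
        refine Finset.sum_congr rfl fun d hd => ?_
        rw [hI, Finset.mem_Icc] at hd
        have hd0 : (d:ℝ) ≠ 0 := by
          have : (0:ℝ) < d := by exact_mod_cast hd.1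
          positivity
        field_simp
    _ = (N:ℝ) * H ^ 3 := by
        rw [← Finset.mul_sum, hHsum]
        ring

/-- `Σ_{m ≤ x} τ(m)² gcd(m, D²) ≪ x τ(D)⁶ (log x)³` with an absolute constant. -/
theorem stmt_11 :
    ∃ C : ℝ, 0 < C ∧ ∀ (D : ℕ) (x : ℝ), 1 ≤ D → 2 ≤ x →
      (∑ m ∈ Finset.Icc 1 ⌊x⌋₊, (m.divisors.card : ℝ) ^ 2 * (Nat.gcd m (D ^ 2) : ℝ)) ≤
        C * x * (D.divisors.card : ℝ) ^ 6 * Real.log x ^ 3 := by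
  refine ⟨27, by norm_num, fun D x hD hx => ?_⟩
  set N := ⌊x⌋₊ with hN
  set I := Finset.Icc 1 N with hI
  set H : ℝ := (harmonic N : ℝ) with hH
  set T : ℝ := (D.divisors.card : ℝ) with hT
  set L : ℝ := Real.log x with hL
  have hD2 : D ^ 2 ≠ 0 := by positivity
  have hN2 : 2 ≤ N := Nat.le_floor (by exact_mod_cast hx)
  have hNx : (N:ℝ) ≤ x := Nat.floor_le (by linarith)
  set E := (D ^ 2).divisors with hE
  have hH0 : 0 ≤ H := by rw [hH]; exact_mod_cast harmonic_nonneg N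
  have hLhalf : 1/2 ≤ L := by
    have h2 : Real.log 2 ≤ L := Real.log_le_log (by norm_num) hx
    have : (1/2 : ℝ) ≤ Real.log 2 := le_trans (by norm_num) Real.log_two_gt_d9.le
    linarith
  have hHL : H ≤ 3 * L := by
    have h1 : H ≤ 1 + Real.log N := by rw [hH]; exact harmonic_le_one_add_log N
    have h2 : Real.log N ≤ L := Real.log_le_log (by positivity) hNx
    linarith
  -- step 1: gcd bound
  have step1 : ∀ m ∈ I, ((Nat.gcd m (D ^ 2) : ℝ)) ≤ ∑ e ∈ E, (if e ∣ m then (e:ℝ) else 0) := by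
    intro m hm
    have hmem : Nat.gcd m (D ^ 2) ∈ E.filter (· ∣ m) := by
      rw [Finset.mem_filter, hE, Nat.mem_divisors]
      exact ⟨⟨Nat.gcd_dvd_right m (D ^ 2), hD2⟩, Nat.gcd_dvd_left m (D ^ 2)⟩
    calc ((Nat.gcd m (D ^ 2) : ℝ)) ≤ ∑ e ∈ E.filter (· ∣ m), (e:ℝ) :=
          Finset.single_le_sum (f := fun e : ℕ => (e:ℝ)) (fun i _ => by positivity) hmem
      _ = _ := Finset.sum_filter _ _
  -- step 2: inner sum bound
  have step2 : ∀ e ∈ E, (∑ m ∈ I.filter (e ∣ ·), ((m.divisors.card:ℝ))^2) * (e:ℝ)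
      ≤ ((e.divisors.card:ℝ))^2 * ((N:ℝ) * H^3) := by
    intro e heE
    have he1 : 1 ≤ e := Nat.pos_of_mem_divisors heE
    have he0 : e ≠ 0 := by omega
    rw [hI, filter_dvd_eq_image N e he1,
      Finset.sum_image (fun x _ y _ h => Nat.eq_of_mul_eq_mul_left (by omega) h)]
    have hb : ∑ k ∈ Finset.Icc 1 (N/e), (((e*k).divisors.card:ℝ))^2
        ≤ (e.divisors.card:ℝ)^2 * ∑ k ∈ Finset.Icc 1 (N/e), ((k.divisors.card:ℝ))^2 := by
      rw [Finset.mul_sum]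
      refine Finset.sum_le_sum fun k hk => ?_
      have hk1 : k ≠ 0 := by have := (Finset.mem_Icc.1 hk).1; omega
      have hcast : ((e*k).divisors.card : ℝ) ≤ (e.divisors.card:ℝ) * (k.divisors.card:ℝ) := by
        exact_mod_cast tau_mul_le_s11 e k he0 hk1
      calc ((e*k).divisors.card:ℝ)^2 ≤ ((e.divisors.card:ℝ) * (k.divisors.card:ℝ))^2 :=
            pow_le_pow_left₀ (by positivity) hcast 2
        _ = _ := by ring
    have hA := sum_tau_sq_le (N/e)
    have hmono : (harmonic (N/e) : ℝ) ≤ H := by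
      rw [hH]; exact_mod_cast harmonic_mono (Nat.div_le_self N e)
    have hdivle : ((N/e : ℕ):ℝ) * (e:ℝ) ≤ (N:ℝ) := by exact_mod_cast Nat.div_mul_le_self N e
    have hh0 : (0:ℝ) ≤ (harmonic (N/e) : ℝ) := by exact_mod_cast harmonic_nonneg (N/e)
    calc (∑ k ∈ Finset.Icc 1 (N/e), (((e*k).divisors.card:ℝ))^2) * (e:ℝ)
        ≤ ((e.divisors.card:ℝ)^2 * ∑ k ∈ Finset.Icc 1 (N/e), ((k.divisors.card:ℝ))^2) * (e:ℝ) :=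
          mul_le_mul_of_nonneg_right hb (by positivity)
      _ ≤ ((e.divisors.card:ℝ)^2 * (((N/e:ℕ):ℝ) * (harmonic (N/e) : ℝ)^3)) * (e:ℝ) := by
          gcongr
      _ = (e.divisors.card:ℝ)^2 * ((((N/e:ℕ):ℝ) * (e:ℝ)) * (harmonic (N/e) : ℝ)^3) := by ring
      _ ≤ ((e.divisors.card:ℝ))^2 * ((N:ℝ) * H^3) := by
          apply mul_le_mul_of_nonneg_left _ (by positivity)
          exact mul_le_mul hdivle (pow_le_pow_left₀ hh0 hmono 3) (by positivity) (by positivity)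
  -- sum of tau^2 over divisors of D^2
  have hτD2 : ((D^2).divisors.card : ℝ) ≤ T^2 := by
    have h := tau_mul_le_s11 D D (by omega) (by omega)
    rw [← pow_two] at h
    calc ((D^2).divisors.card : ℝ) ≤ ((D.divisors.card * D.divisors.card : ℕ) : ℝ) := by
          exact_mod_cast h
      _ = T^2 := by push_cast; rw [hT]; ring
  have hsumE : ∑ e ∈ E, ((e.divisors.card:ℝ))^2 ≤ T^6 := by
    have hτe : ∀ e ∈ E, ((e.divisors.card:ℝ)) ≤ T^2 := by
      intro e he
      have hsub := Nat.divisors_subset_of_dvd hD2 (Nat.mem_divisors.1 he).1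
      calc ((e.divisors.card:ℝ)) ≤ ((D^2).divisors.card:ℝ) := by
            exact_mod_cast Finset.card_le_card hsub
        _ ≤ T^2 := hτD2
    have hT20 : (0:ℝ) ≤ T^2 := by positivity
    calc ∑ e ∈ E, ((e.divisors.card:ℝ))^2 ≤ ∑ e ∈ E, (T^2)^2 :=
          Finset.sum_le_sum fun e he => pow_le_pow_left₀ (by positivity) (hτe e he) 2
      _ = (E.card : ℝ) * T^4 := by rw [Finset.sum_const, nsmul_eq_mul]; ring
      _ ≤ T^2 * T^4 := by
          apply mul_le_mul_of_nonneg_right _ (by positivity)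
          rw [hE]; exact hτD2
      _ = T^6 := by ring
  -- main chain
  calc (∑ m ∈ I, (m.divisors.card : ℝ) ^ 2 * (Nat.gcd m (D ^ 2) : ℝ))
      ≤ ∑ m ∈ I, ∑ e ∈ E, (if e ∣ m then (m.divisors.card : ℝ)^2 * (e:ℝ) else 0) := by
        refine Finset.sum_le_sum fun m hm => ?_
        calc (m.divisors.card : ℝ)^2 * (Nat.gcd m (D ^ 2) : ℝ)
            ≤ (m.divisors.card : ℝ)^2 * (∑ e ∈ E, if e ∣ m then (e:ℝ) else 0) :=
              mul_le_mul_of_nonneg_left (step1 m hm) (by positivity)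
          _ = _ := by
              rw [Finset.mul_sum]
              exact Finset.sum_congr rfl fun e _ => by rw [mul_ite, mul_zero]
    _ = ∑ e ∈ E, ∑ m ∈ I, (if e ∣ m then (m.divisors.card : ℝ)^2 * (e:ℝ) else 0) :=
        Finset.sum_comm
    _ = ∑ e ∈ E, (∑ m ∈ I.filter (e ∣ ·), ((m.divisors.card:ℝ))^2) * (e:ℝ) := by
        refine Finset.sum_congr rfl fun e _ => ?_
        rw [Finset.sum_mul, Finset.sum_filter]
    _ ≤ ∑ e ∈ E, ((e.divisors.card:ℝ))^2 * ((N:ℝ) * H^3) := Finset.sum_le_sum step2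
    _ = (∑ e ∈ E, ((e.divisors.card:ℝ))^2) * ((N:ℝ) * H^3) := by rw [← Finset.sum_mul]
    _ ≤ T^6 * ((N:ℝ) * H^3) := mul_le_mul_of_nonneg_right hsumE (by positivity)
    _ ≤ 27 * x * T ^ 6 * L ^ 3 := by
        have hH3 : H^3 ≤ 27 * L^3 := by
          calc H^3 ≤ (3*L)^3 := pow_le_pow_left₀ hH0 hHL 3
            _ = 27 * L^3 := by ring
        have hNH : (N:ℝ) * H^3 ≤ x * (27 * L^3) :=
          mul_le_mul hNx hH3 (by positivity) (by linarith)
        calc T^6 * ((N:ℝ) * H^3) ≤ T^6 * (x * (27 * L^3)) :=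
              mul_le_mul_of_nonneg_left hNH (by positivity)
          _ = 27 * x * T ^ 6 * L ^ 3 := by ring
end
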